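/- arXiv:2305.10637 — 4 statements merged into one kernel-verified Lean document; each statement's English description precedes it below -/
import Mathlib

section
/- In the setting of Bernoulli observation and Bernoulli(q) splitting, let the test index (i*,j*) given S be uniform on S^c. Then for fixed S₀ and fixed set S₁ disjoint from S₀ with (i_l, j_l) ∉ S₀ ∪ S₁, P(S_cal = S₁, (i*,j*) = (i_l,j_l) | S_tr = S₀, |S|=n) = (1/(d₁d₂ - n)) · [∏_{(i,j)∈S₁} p_{ij}/(1-p_{ij})] / [Σ_{A ∈ Ω} ∏_{(i',j')∈A} p_{i'j'}/(1-p_{i'j'})], where Ω = {A ⊆ [d₁]×[d₂] : |A| = n - |S₀|, A ∩ S₀ = ∅}. -/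
/-!
On the conditioning event the observed set is `S₀ ∪ A` for some `A ∈ Ω`, the split sending `S₀`
to training and `A` to calibration. By independence such a configuration has probability
`∏_{S₀ ∪ A} odds · ∏ (1 - p) · q ^ |S₀| (1 - q) ^ (n - |S₀|)`, in which only `∏_A odds` depends
on `A`; so the calibration set is distributed on `Ω` proportionally to `∏_A odds`. Whatever the
split, the test point is uniform on the `d₁ d₂ - n` unobserved entries, which contributes the
factor `1 / (d₁ d₂ - n)`.
-/

open MeasureTheory ProbabilityTheory Finset

theorem Finset.prod_ite_mem_eq_prod_div_mul_prod {ι K : Type*} [Fintype ι] [DecidableEq ι]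
    [Field K] {a b : ι → K} (hb : ∀ i, b i ≠ 0) (S : Finset ι) :
    ∏ i, (if i ∈ S then a i else b i) = (∏ i ∈ S, a i / b i) * ∏ i, b i := by
  rw [← Fintype.prod_ite_mem S, ← prod_mul_distrib]
  refine prod_congr rfl fun i _ => ?_
  split_ifs <;> simp [div_mul_cancel₀ _ (hb i)]

theorem ProbabilityTheory.iIndepFun.measureReal_inter_preimage_eq_mul {Ω ι : Type*}
    [MeasurableSpace Ω] {μ : Measure Ω} {β : ι → Type*} {m : ∀ i, MeasurableSpace (β i)}
    {f : ∀ i, Ω → β i} (h : iIndepFun f μ) (S : Finset ι) {sets : ∀ i, Set (β i)}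
    (hs : ∀ i ∈ S, MeasurableSet (sets i)) :
    μ.real (⋂ i ∈ S, f i ⁻¹' sets i) = ∏ i ∈ S, μ.real (f i ⁻¹' sets i) := by
  simp only [measureReal_def, h.measure_inter_preimage_eq_mul S hs, ENNReal.toReal_prod]

theorem ProbabilityTheory.toReal_cond_apply {Ω : Type*} [MeasurableSpace Ω] {μ : Measure Ω}
    {s : Set Ω} (hs : MeasurableSet s) (t : Set Ω) :
    (μ[|s] t).toReal = μ.real (s ∩ t) / μ.real s := by
  rw [cond_apply hs, ENNReal.toReal_mul, ENNReal.toReal_inv, inv_mul_eq_div, measureReal_def,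
    measureReal_def]

theorem measureReal_preimage_singleton_bool {Ω : Type*} [MeasurableSpace Ω] {μ : Measure Ω}
    [IsProbabilityMeasure μ] {f : Ω → Bool} (hf : Measurable f) (b : Bool) :
    μ.real (f ⁻¹' {b}) = if b then μ.real {ω | f ω = true} else 1 - μ.real {ω | f ω = true} := by
  cases b
  · have hcompl : f ⁻¹' {false} = {ω | f ω = true}ᶜ := by ext ω; simp
    rw [if_neg Bool.false_ne_true, hcompl]
    exact probReal_compl_eq_one_sub (hf (measurableSet_singleton true))
  · rfl

theorem measureReal_inter_preimage_eq_mul_of_fibers {Ω β : Type*} [MeasurableSpace Ω]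
    {μ : Measure Ω} [IsFiniteMeasure μ] {Y : Ω → β} (hY : ∀ b, MeasurableSet (Y ⁻¹' {b}))
    {A B : Set Ω} (hA : MeasurableSet A) (hB : MeasurableSet B) {c : ℝ}
    (h : ∀ b, μ.real (A ∩ Y ⁻¹' {b}) = c * μ.real (B ∩ Y ⁻¹' {b})) (s : Finset β) :
    μ.real (A ∩ Y ⁻¹' s) = c * μ.real (B ∩ Y ⁻¹' s) := by
  have sum_fibers : ∀ C, MeasurableSet C →
      μ.real (C ∩ Y ⁻¹' s) = ∑ b ∈ s, μ.real (C ∩ Y ⁻¹' {b}) := by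
    intro C hC
    rw [← measureReal_biUnion_finset _ fun b _ => hC.inter (hY b)]
    · congr 1
      ext ω
      simp
    · intro b _ b' _ hne
      exact ((Set.disjoint_singleton.mpr hne).preimage Y).mono Set.inter_subset_right
        Set.inter_subset_right
  rw [sum_fibers A hA, sum_fibers B hB, mul_sum]
  exact sum_congr rfl fun b _ => h b

section SplitEvent

variable {Ω ι : Type*} {Z W : ι → Ω → Bool}

/-- `S` is the observed set; the split sends `U` to training and `V` to calibration. -/
def splitEvent (Z W : ι → Ω → Bool) (S U V : Finset ι) : Set Ω :=
  {ω | (∀ i, Z i ω = true ↔ i ∈ S) ∧ (∀ i ∈ U, W i ω = true) ∧ (∀ i ∈ V, W i ω = false)}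

theorem measurableSet_splitEvent [Finite ι] [MeasurableSpace Ω] (hZ : ∀ i, Measurable (Z i))
    (hW : ∀ i, Measurable (W i)) (S U V : Finset ι) : MeasurableSet (splitEvent Z W S U V) :=
  (measurable_pi_lambda _ hZ).prodMk (measurable_pi_lambda _ hW)
    (t := {x | (∀ i, x.1 i = true ↔ i ∈ S) ∧ (∀ i ∈ U, x.2 i = true) ∧ ∀ i ∈ V, x.2 i = false})
    MeasurableSet.of_discrete

theorem disjoint_splitEvent {S S' : Finset ι} (h : S ≠ S') (U V U' V' : Finset ι) :
    Disjoint (splitEvent Z W S U V) (splitEvent Z W S' U' V') :=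
  Set.disjoint_left.mpr fun _ hω hω' =>
    h <| Finset.ext fun i => (hω.1 i).symm.trans (hω'.1 i)

theorem measureReal_splitEvent [Fintype ι] [DecidableEq ι] [MeasurableSpace Ω] {μ : Measure Ω}
    [IsProbabilityMeasure μ] (hZ : ∀ i, Measurable (Z i))
    (hW : ∀ i, Measurable (W i)) (hindep : iIndepFun (Sum.elim Z W) μ) {p : ι → ℝ} {q : ℝ}
    (hp : ∀ i, p i ≠ 1) (hbernZ : ∀ i, μ.real {ω | Z i ω = true} = p i)
    (hbernW : ∀ i, μ.real {ω | W i ω = true} = q) (S : Finset ι) {U V : Finset ι}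
    (hUV : Disjoint U V) :
    μ.real (splitEvent Z W S U V) =
      (∏ i ∈ S, p i / (1 - p i)) * (∏ i, (1 - p i)) * (q ^ #U * (1 - q) ^ #V) := by
  -- on `U ∪ V` the split is the indicator of `U`
  have hset : splitEvent Z W S U V = ⋂ k ∈ univ.disjSum (U ∪ V),
      Sum.elim Z W k ⁻¹' Sum.elim (fun i => {decide (i ∈ S)}) (fun i => {decide (i ∈ U)}) k := by
    ext ω
    simp only [splitEvent, Set.mem_ofPred_eq, Set.mem_iInter, Sum.forall, inl_mem_disjSum,
      inr_mem_disjSum, mem_univ, true_implies, mem_union, Sum.elim_inl, Sum.elim_inr,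
      Set.mem_preimage, Set.mem_singleton_iff]
    refine and_congr (forall_congr' fun i => by cases Z i ω <;> simp) ⟨?_, fun h => ⟨?_, ?_⟩⟩
    · rintro ⟨hU, hV⟩ i (hi | hi)
      · simp [hi, hU i hi]
      · simp [disjoint_right.mp hUV hi, hV i hi]
    · exact fun i hi => by simpa [hi] using h i (.inl hi)
    · exact fun i hi => by simpa [disjoint_right.mp hUV hi] using h i (.inr hi)
  have hZS : ∀ i, μ.real (Z i ⁻¹' {decide (i ∈ S)}) = if i ∈ S then p i else 1 - p i := by
    intro i
    rw [measureReal_preimage_singleton_bool (hZ i), hbernZ]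
    simp
  have hWU : ∀ i ∈ U, μ.real (W i ⁻¹' {decide (i ∈ U)}) = q := by
    intro i hi
    rw [measureReal_preimage_singleton_bool (hW i), hbernW]
    simp [hi]
  have hWV : ∀ i ∈ V, μ.real (W i ⁻¹' {decide (i ∈ U)}) = 1 - q := by
    intro i hi
    rw [measureReal_preimage_singleton_bool (hW i), hbernW]
    simp [disjoint_right.mp hUV hi]
  rw [hset, hindep.measureReal_inter_preimage_eq_mul _ fun _ _ => MeasurableSet.of_discrete,
    prod_disjSum, prod_union hUV]
  simp only [Sum.elim_inl, Sum.elim_inr]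
  rw [prod_congr rfl fun i _ => hZS i, prod_ite_mem_eq_prod_div_mul_prod
    (fun i => sub_ne_zero.mpr (hp i).symm), prod_congr rfl hWU, prod_congr rfl hWV, prod_const,
    prod_const]

end SplitEvent

section TestPoint

variable {Ω ι : Type*} [MeasurableSpace Ω] {μ : Measure Ω} [Fintype ι] [DecidableEq ι]
  {Z W : ι → Ω → Bool}

theorem measureReal_testPoint_inter_splitEvent [IsFiniteMeasure μ] (hZ : ∀ i, Measurable (Z i))
    (hW : ∀ i, Measurable (W i)) [MeasurableSpace ι] [MeasurableSingletonClass ι] {T : Ω → ι}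
    (hT : Measurable T)
    (hTunif : ∀ (z w : ι → Bool) (t : ι), z t = false →
      μ.real {ω | T ω = t ∧ (∀ i, Z i ω = z i) ∧ (∀ i, W i ω = w i)}
        = μ.real {ω | (∀ i, Z i ω = z i) ∧ (∀ i, W i ω = w i)} / #{i | z i = false})
    {S : Finset ι} {l : ι} (hl : l ∉ S) (U V : Finset ι) :
    μ.real (T ⁻¹' {l} ∩ splitEvent Z W S U V) = μ.real (splitEvent Z W S U V) / #Sᶜ := by
  set observed := {ω | ∀ i, Z i ω = decide (i ∈ S)}
  set split : Ω → ι → Bool := fun ω i => W i ω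
  set admissible : Finset (ι → Bool) := {w | (∀ i ∈ U, w i = true) ∧ ∀ i ∈ V, w i = false}
  have hsplit : splitEvent Z W S U V = observed ∩ split ⁻¹' admissible := by
    ext ω
    simp only [splitEvent, observed, split, admissible, Set.mem_inter_iff, Set.mem_preimage,
      coe_filter, Set.mem_ofPred_eq, mem_univ, true_and]
    exact and_congr (forall_congr' fun i => by cases Z i ω <;> simp) Iff.rfl
  have hobserved : MeasurableSet observed :=
    measurable_pi_lambda _ hZ (t := {z | ∀ i, z i = decide (i ∈ S)}) MeasurableSet.of_discrete
  have hfiber : ∀ w, μ.real ((T ⁻¹' {l} ∩ observed) ∩ split ⁻¹' {w}) =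
      (#Sᶜ : ℝ)⁻¹ * μ.real (observed ∩ split ⁻¹' {w}) := by
    intro w
    have hcompl : #{i | decide (i ∈ S) = false} = #Sᶜ := by
      congr 1
      ext i
      simp
    have hcell : observed ∩ split ⁻¹' {w} =
        {ω | (∀ i, Z i ω = decide (i ∈ S)) ∧ ∀ i, W i ω = w i} := by
      ext ω
      simp [observed, split, funext_iff]
    rw [Set.inter_assoc, hcell, inv_mul_eq_div, ← hcompl, ← hTunif _ w l (by simpa using hl)]
    rfl
  rw [hsplit, ← Set.inter_assoc, measureReal_inter_preimage_eq_mul_of_fibers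
    (fun _ => measurable_pi_lambda _ hW MeasurableSet.of_discrete)
    ((hT (measurableSet_singleton l)).inter hobserved) hobserved hfiber, inv_mul_eq_div]

end TestPoint

section Decomposition

variable {Ω ι : Type*} {Z W : ι → Ω → Bool} {ω : Ω}

theorem support_eq_of_mem_splitEvent [Fintype ι] {S U V : Finset ι}
    (h : ω ∈ splitEvent Z W S U V) :
    ({i | Z i ω = true} : Finset ι) = S :=
  Finset.ext fun i => by simpa using h.1 i

theorem mem_splitEvent_union_iff [DecidableEq ι] {S₀ A : Finset ι} :
    ω ∈ splitEvent Z W (S₀ ∪ A) S₀ A ↔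
      (∀ i, (Z i ω = true ∧ W i ω = true) ↔ i ∈ S₀) ∧
        ∀ i, (Z i ω = true ∧ W i ω = false) ↔ i ∈ A := by
  constructor
  · rintro ⟨hZ, hW₀, hWA⟩
    refine ⟨fun i => ⟨fun ⟨hZi, hWi⟩ => ?_, fun hi => ⟨(hZ i).2 (mem_union_left _ hi), hW₀ i hi⟩⟩,
      fun i => ⟨fun ⟨hZi, hWi⟩ => ?_, fun hi => ⟨(hZ i).2 (mem_union_right _ hi), hWA i hi⟩⟩⟩
    · exact (mem_union.1 ((hZ i).1 hZi)).resolve_right fun hi => by simp [hWA i hi] at hWi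
    · exact (mem_union.1 ((hZ i).1 hZi)).resolve_left fun hi => by simp [hW₀ i hi] at hWi
  · rintro ⟨htrain, hcal⟩
    refine ⟨fun i => ⟨fun hZi => ?_, fun hi => ?_⟩, fun i hi => ((htrain i).2 hi).2,
      fun i hi => ((hcal i).2 hi).2⟩
    · cases hWi : W i ω
      · exact mem_union_right _ ((hcal i).1 ⟨hZi, hWi⟩)
      · exact mem_union_left _ ((htrain i).1 ⟨hZi, hWi⟩)
    · exact (mem_union.1 hi).elim (fun h => ((htrain i).2 h).1) fun h => ((hcal i).2 h).1

theorem setOf_train_card_eq_biUnion_splitEvent [Fintype ι] [DecidableEq ι] (Z W : ι → Ω → Bool)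
    {S₀ : Finset ι} {n : ℕ} (hS₀ : #S₀ ≤ n) :
    {ω | (∀ i, (Z i ω = true ∧ W i ω = true) ↔ i ∈ S₀) ∧ #{i | Z i ω = true} = n} =
      ⋃ A ∈ {A ∈ powersetCard (n - #S₀) (univ : Finset ι) | Disjoint A S₀},
        splitEvent Z W (S₀ ∪ A) S₀ A := by
  ext ω
  simp only [Set.mem_ofPred_eq, Set.mem_iUnion, mem_filter, mem_powersetCard, exists_prop]
  constructor
  · rintro ⟨htrain, hcard⟩
    set A : Finset ι := {i | Z i ω = true ∧ W i ω = false}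
    have hA : ω ∈ splitEvent Z W (S₀ ∪ A) S₀ A := mem_splitEvent_union_iff.2 ⟨htrain, by simp [A]⟩
    have hdisj : Disjoint A S₀ := disjoint_left.2 fun i hiA hi₀ => by
      simp [A, ((htrain i).2 hi₀).2] at hiA
    refine ⟨A, ⟨⟨subset_univ _, ?_⟩, hdisj⟩, hA⟩
    rw [← hcard, support_eq_of_mem_splitEvent hA, card_union_of_disjoint hdisj.symm]
    omega
  · rintro ⟨A, ⟨⟨-, hcard⟩, hdisj⟩, hA⟩
    refine ⟨(mem_splitEvent_union_iff.1 hA).1, ?_⟩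
    rw [support_eq_of_mem_splitEvent hA, card_union_of_disjoint hdisj.symm, hcard]
    omega

theorem setOf_train_card_inter_setOf_cal_testPoint [Fintype ι] [DecidableEq ι] {T : Ω → ι}
    {S₀ S₁ : Finset ι} {n : ℕ} (hdisj : Disjoint S₀ S₁) (hcard : #S₀ + #S₁ = n) (l : ι) :
    {ω | (∀ i, (Z i ω = true ∧ W i ω = true) ↔ i ∈ S₀) ∧ #{i | Z i ω = true} = n} ∩
        {ω | (∀ i, (Z i ω = true ∧ W i ω = false) ↔ i ∈ S₁) ∧ T ω = l} =
      T ⁻¹' {l} ∩ splitEvent Z W (S₀ ∪ S₁) S₀ S₁ := by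
  ext ω
  simp only [Set.mem_inter_iff, Set.mem_ofPred_eq, Set.mem_preimage, Set.mem_singleton_iff]
  constructor
  · rintro ⟨⟨htrain, -⟩, hcal, hT⟩
    exact ⟨hT, mem_splitEvent_union_iff.2 ⟨htrain, hcal⟩⟩
  · rintro ⟨hT, hsplit⟩
    obtain ⟨htrain, hcal⟩ := mem_splitEvent_union_iff.1 hsplit
    rw [support_eq_of_mem_splitEvent hsplit, card_union_of_disjoint hdisj, hcard]
    exact ⟨⟨htrain, rfl⟩, hcal, hT⟩

end Decomposition

section TrainingEvent

variable {Ω ι : Type*} [Fintype ι] [MeasurableSpace Ω] {Z W : ι → Ω → Bool}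

theorem measurableSet_setOf_train_card (hZ : ∀ i, Measurable (Z i))
    (hW : ∀ i, Measurable (W i)) (S₀ : Finset ι) (n : ℕ) :
    MeasurableSet
      {ω | (∀ i, (Z i ω = true ∧ W i ω = true) ↔ i ∈ S₀) ∧ #{i | Z i ω = true} = n} :=
  (measurable_pi_lambda _ hZ).prodMk (measurable_pi_lambda _ hW)
    (t := {x | (∀ i, (x.1 i = true ∧ x.2 i = true) ↔ i ∈ S₀) ∧ #{i | x.1 i = true} = n})
    MeasurableSet.of_discrete

theorem measureReal_setOf_train_card [DecidableEq ι] {μ : Measure Ω} [IsProbabilityMeasure μ]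
    (hZ : ∀ i, Measurable (Z i)) (hW : ∀ i, Measurable (W i))
    (hindep : iIndepFun (Sum.elim Z W) μ) {p : ι → ℝ} {q : ℝ} (hp : ∀ i, p i ≠ 1)
    (hbernZ : ∀ i, μ.real {ω | Z i ω = true} = p i)
    (hbernW : ∀ i, μ.real {ω | W i ω = true} = q) {S₀ : Finset ι} {n : ℕ} (hS₀ : #S₀ ≤ n) :
    μ.real {ω | (∀ i, (Z i ω = true ∧ W i ω = true) ↔ i ∈ S₀) ∧ #{i | Z i ω = true} = n} =
      (∏ i ∈ S₀, p i / (1 - p i)) * (∏ i, (1 - p i)) * (q ^ #S₀ * (1 - q) ^ (n - #S₀)) *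
        ∑ A ∈ {A ∈ powersetCard (n - #S₀) univ | Disjoint A S₀}, ∏ i ∈ A, p i / (1 - p i) := by
  rw [setOf_train_card_eq_biUnion_splitEvent Z W hS₀,
    measureReal_biUnion_finset ?_ fun A _ => measurableSet_splitEvent hZ hW _ _ _, mul_sum]
  · refine sum_congr rfl fun A hA => ?_
    obtain ⟨hAcard, hAdisj⟩ := mem_filter.1 hA
    rw [measureReal_splitEvent hZ hW hindep hp hbernZ hbernW _ hAdisj.symm,
      prod_union hAdisj.symm, (mem_powersetCard.1 hAcard).2]
    ring
  · intro A hA A' hA' hne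
    refine disjoint_splitEvent (fun h => hne ?_) _ _ _ _
    rw [← union_sdiff_cancel_left (mem_filter.1 hA).2.symm, h,
      union_sdiff_cancel_left (mem_filter.1 hA').2.symm]

end TrainingEvent

theorem split_with_test_point_law_general {Ω : Type*} [MeasurableSpace Ω]
    (μ : Measure Ω) [IsProbabilityMeasure μ]
    (d₁ d₂ : ℕ) (p : Fin d₁ × Fin d₂ → ℝ) (hp : ∀ ij, p ij ∈ Set.Ioo (0:ℝ) 1)
    (q : ℝ) (hq : q ∈ Set.Ioo (0:ℝ) 1)
    (Z W : Fin d₁ × Fin d₂ → Ω → Bool) (T : Ω → Fin d₁ × Fin d₂)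
    (hZmeas : ∀ ij, Measurable (Z ij)) (hWmeas : ∀ ij, Measurable (W ij))
    (hTmeas : Measurable T)
    (hindep : iIndepFun (Sum.elim Z W) μ)
    (hbernZ : ∀ ij, (μ {ω | Z ij ω = true}).toReal = p ij)
    (hbernW : ∀ ij, (μ {ω | W ij ω = true}).toReal = q)
    -- T | S ~ Unif(Sᶜ), conditionally independent of the split W given Z:
    (hTunif : ∀ (z wf : Fin d₁ × Fin d₂ → Bool) (t : Fin d₁ × Fin d₂), z t = false →
      (μ {ω | T ω = t ∧ (∀ ij, Z ij ω = z ij) ∧ (∀ ij, W ij ω = wf ij)}).toReal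
        = (μ {ω | (∀ ij, Z ij ω = z ij) ∧ (∀ ij, W ij ω = wf ij)}).toReal
            / ((Finset.univ.filter (fun ij => z ij = false)).card : ℝ))
    (n : ℕ)
    (S₀ S₁ : Finset (Fin d₁ × Fin d₂)) (l : Fin d₁ × Fin d₂)
    (hdisj : Disjoint S₀ S₁) (hl : l ∉ S₀ ∪ S₁) (hcard : S₀.card + S₁.card = n) :
    (μ[|{ω | (∀ ij, (Z ij ω = true ∧ W ij ω = true) ↔ ij ∈ S₀) ∧
             (Finset.univ.filter (fun ij => Z ij ω = true)).card = n}]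
        {ω | (∀ ij, (Z ij ω = true ∧ W ij ω = false) ↔ ij ∈ S₁) ∧ T ω = l}).toReal =
      (1 / ((d₁ : ℝ) * d₂ - n)) *
        ((∏ ij ∈ S₁, p ij / (1 - p ij)) /
          (∑ A ∈ (Finset.univ.powersetCard (n - S₀.card)).filter (fun A => Disjoint A S₀),
            ∏ ij ∈ A, p ij / (1 - p ij))) := by
  set E := {ω | (∀ ij, (Z ij ω = true ∧ W ij ω = true) ↔ ij ∈ S₀) ∧ #{ij | Z ij ω = true} = n}
  set F := {ω | (∀ ij, (Z ij ω = true ∧ W ij ω = false) ↔ ij ∈ S₁) ∧ T ω = l}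
  have hp₁ : ∀ ij, p ij ≠ 1 := fun ij => (hp ij).2.ne
  set c := (∏ ij ∈ S₀, p ij / (1 - p ij)) * (∏ ij, (1 - p ij)) * (q ^ #S₀ * (1 - q) ^ (n - #S₀))
  have hc : c ≠ 0 := by
    have hp' : ∀ ij, 0 < 1 - p ij := fun ij => sub_pos.2 (hp ij).2
    have hodds : 0 < ∏ ij ∈ S₀, p ij / (1 - p ij) :=
      prod_pos fun ij _ => div_pos (hp ij).1 (hp' ij)
    have hK : 0 < ∏ ij, (1 - p ij) := prod_pos fun ij _ => hp' ij
    exact (mul_pos (mul_pos hodds hK) (mul_pos (pow_pos hq.1 _) (pow_pos (sub_pos.2 hq.2) _))).ne'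
  have hnum : μ.real (E ∩ F) = c * (∏ ij ∈ S₁, p ij / (1 - p ij)) / ((d₁ : ℝ) * d₂ - n) := by
    rw [setOf_train_card_inter_setOf_cal_testPoint hdisj hcard l,
      measureReal_testPoint_inter_splitEvent hZmeas hWmeas hTmeas hTunif hl,
      measureReal_splitEvent hZmeas hWmeas hindep hp₁ hbernZ hbernW _ hdisj, prod_union hdisj,
      card_compl, Nat.cast_sub (card_le_univ _), card_union_of_disjoint hdisj, hcard,
      show #S₁ = n - #S₀ by omega]
    simp only [Fintype.card_prod, Fintype.card_fin, Nat.cast_mul, c]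
    ring
  rw [toReal_cond_apply (measurableSet_setOf_train_card hZmeas hWmeas S₀ n), hnum,
    measureReal_setOf_train_card hZmeas hWmeas hindep hp₁ hbernZ hbernW (by omega),
    mul_div_assoc, mul_div_mul_left _ _ hc]
  ring

/-- With a test index drawn uniformly from the unobserved set (conditionally
on the observation pattern, independently of the split), the conditional probability that
the calibration set equals S₁ and the test point equals a fixed location l, given
S_tr = S₀ and |S| = n, equals (1/(d₁d₂-n)) · ∏_{S₁} odds / Σ_{A ∈ Ω} ∏_A odds, where Ω
is the collection of sets of size n - |S₀| disjoint from S₀. -/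
theorem split_with_test_point_law {Ω : Type*} [MeasurableSpace Ω]
    (μ : Measure Ω) [IsProbabilityMeasure μ]
    (d₁ d₂ : ℕ) (p : Fin d₁ × Fin d₂ → ℝ) (hp : ∀ ij, p ij ∈ Set.Ioo (0:ℝ) 1)
    (q : ℝ) (hq : q ∈ Set.Ioo (0:ℝ) 1)
    (Z W : Fin d₁ × Fin d₂ → Ω → Bool) (T : Ω → Fin d₁ × Fin d₂)
    (hZmeas : ∀ ij, Measurable (Z ij)) (hWmeas : ∀ ij, Measurable (W ij))
    (hTmeas : Measurable T)
    (hindep : iIndepFun (Sum.elim Z W) μ)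
    (hbernZ : ∀ ij, (μ {ω | Z ij ω = true}).toReal = p ij)
    (hbernW : ∀ ij, (μ {ω | W ij ω = true}).toReal = q)
    -- T | S ~ Unif(Sᶜ), conditionally independent of the split W given Z:
    (hTunif : ∀ (z wf : Fin d₁ × Fin d₂ → Bool) (t : Fin d₁ × Fin d₂), z t = false →
      (μ {ω | T ω = t ∧ (∀ ij, Z ij ω = z ij) ∧ (∀ ij, W ij ω = wf ij)}).toReal
        = (μ {ω | (∀ ij, Z ij ω = z ij) ∧ (∀ ij, W ij ω = wf ij)}).toReal
            / ((Finset.univ.filter (fun ij => z ij = false)).card : ℝ))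
    (n : ℕ) (hn : n < d₁ * d₂)
    (S₀ S₁ : Finset (Fin d₁ × Fin d₂)) (l : Fin d₁ × Fin d₂)
    (hdisj : Disjoint S₀ S₁) (hl : l ∉ S₀ ∪ S₁) (hcard : S₀.card + S₁.card = n) :
    (μ[|{ω | (∀ ij, (Z ij ω = true ∧ W ij ω = true) ↔ ij ∈ S₀) ∧
             (Finset.univ.filter (fun ij => Z ij ω = true)).card = n}]
        {ω | (∀ ij, (Z ij ω = true ∧ W ij ω = false) ↔ ij ∈ S₁) ∧ T ω = l}).toReal =
      (1 / ((d₁ : ℝ) * d₂ - n)) *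
        ((∏ ij ∈ S₁, p ij / (1 - p ij)) /
          (∑ A ∈ (Finset.univ.powersetCard (n - S₀.card)).filter (fun A => Disjoint A S₀),
            ∏ ij ∈ A, p ij / (1 - p ij))) :=
  split_with_test_point_law_general μ d₁ d₂ p hp q hq Z W T hZmeas hWmeas hTmeas hindep hbernZ
    hbernW hTunif n S₀ S₁ l hdisj hl hcard
end

section
/- Let I be a finite index set, (w'_{ij})_{(i,j)∈I} nonnegative weights summing to 1, fix (i*,j*) ∈ I, and let (ŵ_{ij})_{(i,j)∈I\{(i*,j*)}} with ŵ_{ij} ≤ w'_{ij} for all (i,j) ≠ (i*,j*), and ŵ_test ≥ w'_{i*j*} with Σ ŵ_{ij} + ŵ_test = 1. Then for any residuals R_{ij} ∈ ℝ and any α ∈ (0,1), Quantile_{1-α}(Σ_{(i,j)≠(i*,j*)} ŵ_{ij} δ_{R_{ij}} + ŵ_test δ_{+∞}) ≥ Quantile_{1-α}(Σ_{(i,j)∈I} w'_{ij} δ_{R_{ij}}). -/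
/-!
Let `μ` be the weighted empirical measure of the residuals and `ν` the shrunken one with the test
mass moved to `tinf`, beyond all residuals. Then `ν ≤ μ + c • δ_tinf`, so below `tinf` the cdf of
`ν` is at most that of `μ`, while from `tinf` on the cdf of `μ` is already `1`. Hence every level
reached by `ν` at some `t` is reached by `μ` at `t` too, and the infimum defining the quantile of
`μ` is taken over a larger set.
-/

open MeasureTheory Finset

noncomputable def quantile (μ : Measure ℝ) (β : ℝ) : ℝ :=
  sInf {t : ℝ | β ≤ μ.real (Set.Iic t)}

section Dirac

variable {α ι : Type*} [MeasurableSpace α]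

theorem sum_ofReal_smul_dirac_apply_univ (s : Finset ι) {w : ι → ℝ} (hw : ∀ i ∈ s, 0 ≤ w i)
    (a : ι → α) :
    (∑ i ∈ s, ENNReal.ofReal (w i) • Measure.dirac (a i)) Set.univ
      = ENNReal.ofReal (∑ i ∈ s, w i) := by
  simp [Measure.finsetSum_apply, ENNReal.ofReal_sum_of_nonneg hw]

theorem sum_smul_dirac_apply_eq_zero [MeasurableSingletonClass α] {s : Finset ι}
    (c : ι → ENNReal) {a : ι → α} {A : Set α} (h : ∀ i ∈ s, a i ∉ A) :
    (∑ i ∈ s, c i • Measure.dirac (a i)) A = 0 := by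
  rw [Measure.finsetSum_apply]
  exact Finset.sum_eq_zero fun i hi => by simp [Measure.dirac_apply, h i hi]

theorem sum_ofReal_smul_dirac_le_of_subset {s t : Finset ι} (hst : s ⊆ t) {v w : ι → ℝ}
    (hvw : ∀ i ∈ s, v i ≤ w i) (a : ι → α) :
    ∑ i ∈ s, ENNReal.ofReal (v i) • Measure.dirac (a i)
      ≤ ∑ i ∈ t, ENNReal.ofReal (w i) • Measure.dirac (a i) :=
  calc ∑ i ∈ s, ENNReal.ofReal (v i) • Measure.dirac (a i)
      ≤ ∑ i ∈ s, ENNReal.ofReal (w i) • Measure.dirac (a i) :=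
        Finset.sum_le_sum fun i hi => by gcongr; exact hvw i hi
    _ ≤ ∑ i ∈ t, ENNReal.ofReal (w i) • Measure.dirac (a i) :=
        Finset.sum_le_sum_of_subset_of_nonneg hst fun _ _ _ => Measure.zero_le _

theorem measure_eq_zero_of_le_add_smul_dirac [MeasurableSingletonClass α] {μ ν : Measure α}
    {x : α} {c : ENNReal} {A : Set α} (hμ : μ A = 0) (hx : x ∉ A)
    (hν : ν ≤ μ + c • Measure.dirac x) : ν A = 0 :=
  le_antisymm ((hν A).trans (by simp [hμ, Measure.dirac_apply, hx])) bot_le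

end Dirac

section Quantile

variable {μ ν : Measure ℝ} {x β : ℝ} {c : ENNReal}

theorem bddBelow_setOf_le_measureReal_Iic [IsProbabilityMeasure μ] (hβ : 0 < β) :
    BddBelow {t : ℝ | β ≤ μ.real (Set.Iic t)} := by
  obtain ⟨t₀, ht₀⟩ :=
    ((ProbabilityTheory.tendsto_cdf_atBot μ).eventually (gt_mem_nhds hβ)).exists
  refine ⟨t₀, fun t (ht : β ≤ μ.real (Set.Iic t)) => le_of_not_gt fun hlt => ?_⟩
  have hmono := ProbabilityTheory.monotone_cdf μ hlt.le
  rw [← ProbabilityTheory.cdf_eq_real] at ht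
  linarith

theorem measureReal_Iic_eq_one [IsProbabilityMeasure μ] (h : μ (Set.Ioi x) = 0) :
    μ.real (Set.Iic x) = 1 := by
  rw [← Set.compl_Ioi, measureReal_def, (prob_compl_eq_one_iff measurableSet_Ioi).2 h,
    ENNReal.toReal_one]

theorem measureReal_Iic_le_of_le_add_smul_dirac [IsFiniteMeasure μ] {t : ℝ} (ht : t < x)
    (hν : ν ≤ μ + c • Measure.dirac x) : ν.real (Set.Iic t) ≤ μ.real (Set.Iic t) := by
  refine ENNReal.toReal_mono (measure_ne_top μ _) ((hν _).trans ?_)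
  simp [not_le.2 ht]

theorem quantile_le_quantile_of_le_add_smul_dirac [IsProbabilityMeasure μ] [IsProbabilityMeasure ν]
    (hμ : μ (Set.Ioi x) = 0) (hν : ν ≤ μ + c • Measure.dirac x) (hβ₀ : 0 < β) (hβ₁ : β ≤ 1) :
    quantile μ β ≤ quantile ν β := by
  have hνx : ν.real (Set.Iic x) = 1 :=
    measureReal_Iic_eq_one (measure_eq_zero_of_le_add_smul_dirac hμ (lt_irrefl x) hν)
  refine csInf_le_csInf (bddBelow_setOf_le_measureReal_Iic hβ₀) ⟨x, hνx.ge.trans' hβ₁⟩ ?_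
  intro t (ht : β ≤ ν.real (Set.Iic t))
  rcases lt_or_ge t x with htx | hxt
  · exact ht.trans (measureReal_Iic_le_of_le_add_smul_dirac htx hν)
  · calc β ≤ μ.real (Set.Iic x) := (measureReal_Iic_eq_one hμ).ge.trans' hβ₁
      _ ≤ μ.real (Set.Iic t) := measureReal_mono (Set.Iic_subset_Iic.2 hxt)

end Quantile

/-- replacing the test point's mass by a point mass beyond all residuals and
shrinking the calibration weights only increases the (1-α)-quantile. -/
theorem quantile_conservative_one_shot {I : Type*} [Fintype I] [DecidableEq I]
    (w' : I → ℝ) (istar : I)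
    (hw'nn : ∀ i, 0 ≤ w' i) (hw'1 : ∑ i, w' i = 1)
    (what : I → ℝ) (wtest : ℝ)
    (hwhatnn : ∀ i, 0 ≤ what i)
    (hle : ∀ i, i ≠ istar → what i ≤ w' i) (hge : w' istar ≤ wtest)
    (hsum : (∑ i ∈ Finset.univ.erase istar, what i) + wtest = 1)
    (R : I → ℝ) (tinf : ℝ) (htinf : ∀ i, R i < tinf)
    (α : ℝ) (hα : α ∈ Set.Ioo (0:ℝ) 1) :
    sInf {t : ℝ | 1 - α ≤
        ((∑ i, ENNReal.ofReal (w' i) • Measure.dirac (R i) : Measure ℝ) (Set.Iic t)).toReal} ≤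
      sInf {t : ℝ | 1 - α ≤
        (((∑ i ∈ Finset.univ.erase istar, ENNReal.ofReal (what i) • Measure.dirac (R i)
            : Measure ℝ) + ENNReal.ofReal wtest • Measure.dirac tinf)
          (Set.Iic t)).toReal} := by
  obtain ⟨hα₀, hα₁⟩ := hα
  set μ : Measure ℝ := ∑ i, ENNReal.ofReal (w' i) • Measure.dirac (R i)
  set ν₀ : Measure ℝ := ∑ i ∈ univ.erase istar, ENNReal.ofReal (what i) • Measure.dirac (R i)
  have hwtest : 0 ≤ wtest := (hw'nn istar).trans hge
  have : IsProbabilityMeasure μ :=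
    ⟨by rw [sum_ofReal_smul_dirac_apply_univ _ (fun i _ => hw'nn i), hw'1, ENNReal.ofReal_one]⟩
  have : IsProbabilityMeasure (ν₀ + ENNReal.ofReal wtest • Measure.dirac tinf) := by
    constructor
    rw [Measure.add_apply, sum_ofReal_smul_dirac_apply_univ _ (fun i _ => hwhatnn i),
      Measure.smul_apply, measure_univ, smul_eq_mul, mul_one,
      ← ENNReal.ofReal_add (Finset.sum_nonneg fun i _ => hwhatnn i) hwtest, hsum,
      ENNReal.ofReal_one]
  have hμ : μ (Set.Ioi tinf) = 0 :=
    sum_smul_dirac_apply_eq_zero _ fun i _ => Set.notMem_Ioi.2 (htinf i).le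
  have hν₀ : ν₀ ≤ μ := sum_ofReal_smul_dirac_le_of_subset (Finset.erase_subset _ _)
    (fun i hi => hle i (Finset.ne_of_mem_erase hi)) R
  exact quantile_le_quantile_of_le_add_smul_dirac hμ (add_le_add_left hν₀ _)
    (by linarith) (by linarith)
end

section
/- Let (R_k)_{k=1}^{n+1} be exchangeable real-valued random variables (in the sense that for the random index K uniform on {1,…,n+1} conditional on the multiset of values, R_K is the test residual), and more generally suppose the test index K satisfies P(K = k | unordered values) = w_k for weights w_k summing to 1. Then P(R_K ≤ Quantile_{1-α}(Σ_{k=1}^{n+1} w_k δ_{R_k})) ≥ 1 - α. -/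
open MeasureTheory ProbabilityTheory Finset

section det
variable {m : ℕ} (w : Fin (m+1) → ℝ) (r : Fin (m+1) → ℝ) (β : ℝ)

noncomputable def wcdf (t : ℝ) : ℝ := ∑ k, if r k ≤ t then w k else 0

lemma wcdf_mono (hw : ∀ k, 0 ≤ w k) : Monotone (wcdf w r) := by
  intro s t hst
  refine Finset.sum_le_sum fun k _ => ?_
  by_cases h : r k ≤ s
  · simp [h, h.trans hst]
  · by_cases h' : r k ≤ t <;> simp [h, h', hw k]

lemma wcdf_nonempty (hw1 : ∑ k, w k = 1) (hβ : β ≤ 1) :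
    ((univ : Finset (Fin (m+1))).sup' ⟨0, mem_univ 0⟩ r) ∈ {t | β ≤ wcdf w r t} := by
  have : wcdf w r (univ.sup' ⟨0, mem_univ 0⟩ r) = 1 := by
    rw [← hw1]
    refine Finset.sum_congr rfl fun k _ => ?_
    simp [Finset.le_sup' r (mem_univ k)]
  simpa [this] using hβ

lemma wcdf_bddBelow (hβ : 0 < β) : BddBelow {t | β ≤ wcdf w r t} := by
  refine ⟨(univ : Finset (Fin (m+1))).inf' ⟨0, mem_univ 0⟩ r, fun t ht => ?_⟩
  by_contra h
  push_neg at h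
  have : wcdf w r t = 0 := by
    refine Finset.sum_eq_zero fun k _ => ?_
    have : ¬ r k ≤ t := fun hc => absurd (le_trans (Finset.inf'_le r (mem_univ k)) hc) (not_le.2 h)
    simp [this]
  rw [Set.mem_setOf_eq, this] at ht
  linarith

lemma wcdf_attains (hw : ∀ k, 0 ≤ w k) (hw1 : ∑ k, w k = 1) (hβ0 : 0 < β) (hβ1 : β ≤ 1) :
    β ≤ wcdf w r (sInf {t | β ≤ wcdf w r t}) := by
  set T := {t | β ≤ wcdf w r t} with hT
  set q := sInf T with hq
  have hne : T.Nonempty := ⟨_, wcdf_nonempty w r β hw1 hβ1⟩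
  have hbdd : BddBelow T := wcdf_bddBelow w r β hβ0
  obtain ⟨ε, hε, hgap⟩ : ∃ ε > 0, ∀ k, q < r k → q + ε ≤ r k := by
    by_cases hA : ∃ k, q < r k
    · obtain ⟨S, hS⟩ : ∃ S : Finset (Fin (m+1)), S = univ.filter (fun k => q < r k) := ⟨_, rfl⟩
      have hSne : S.Nonempty := by
        obtain ⟨k, hk⟩ := hA
        exact ⟨k, by simp [hS, hk]⟩
      refine ⟨S.inf' hSne r - q, ?_, fun k hk => ?_⟩
      · have : q < S.inf' hSne r := by
          rw [Finset.lt_inf'_iff]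
          intro k hk
          simp only [hS, mem_filter] at hk
          exact hk.2
        linarith
      · have : S.inf' hSne r ≤ r k := Finset.inf'_le r (by simp [hS, hk])
        linarith
    · push_neg at hA
      exact ⟨1, one_pos, fun k hk => absurd hk (not_lt.2 (hA k))⟩
  obtain ⟨t', ht'T, ht'⟩ : ∃ t' ∈ T, t' < q + ε :=
    exists_lt_of_csInf_lt hne (by linarith [lt_add_of_pos_right q hε])
  have : wcdf w r t' ≤ wcdf w r q := by
    refine Finset.sum_le_sum fun k _ => ?_
    by_cases h : r k ≤ t'
    · have : r k ≤ q := by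
        by_contra hc
        push_neg at hc
        exact absurd (lt_of_le_of_lt (hgap k hc) (by linarith)) (lt_irrefl _)
      simp [h, this]
    · by_cases h' : r k ≤ q <;> simp [h, h', hw k]
  exact le_trans ht'T this

lemma wcdf_quantile_le_iff (hw : ∀ k, 0 ≤ w k) (hw1 : ∑ k, w k = 1) (hβ0 : 0 < β) (hβ1 : β ≤ 1)
    (c : ℝ) : sInf {t | β ≤ wcdf w r t} ≤ c ↔ β ≤ wcdf w r c :=
  ⟨fun h => le_trans (wcdf_attains w r β hw hw1 hβ0 hβ1) (wcdf_mono w r hw h),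
   fun h => csInf_le (wcdf_bddBelow w r β hβ0) h⟩

lemma wcc_F_eq (hw : ∀ k, 0 ≤ w k) (t : ℝ) :
    ((∑ k, ENNReal.ofReal (w k) • Measure.dirac (r k) : Measure ℝ) (Set.Iic t)).toReal
      = wcdf w r t := by
  rw [Measure.finset_sum_apply, ENNReal.toReal_sum]
  · refine Finset.sum_congr rfl fun k _ => ?_
    rw [Measure.smul_apply, Measure.dirac_apply' _ measurableSet_Iic, smul_eq_mul]
    by_cases h : r k ≤ t
    · simp [Set.indicator, h, ENNReal.toReal_ofReal (hw k)]
    · simp [Set.indicator, h]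
  · intro k _
    rw [Measure.smul_apply, Measure.dirac_apply' _ measurableSet_Iic, smul_eq_mul]
    exact ENNReal.mul_ne_top ENNReal.ofReal_ne_top
      (by by_cases h : r k ≤ t <;> simp [Set.indicator, h])

end det

lemma wcc_indicator_integrable {Ω : Type*} {m0 : MeasurableSpace Ω} (μ : Measure Ω)
    [IsFiniteMeasure μ] {s : Set Ω} (hs : MeasurableSet s) :
    Integrable (Set.indicator s (fun _ => (1:ℝ))) μ :=
  (integrable_const (1:ℝ)).indicator hs

lemma wcc_integral_indicator_one {Ω : Type*} {m0 : MeasurableSpace Ω} (μ : Measure Ω)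
    {s : Set Ω} (hs : MeasurableSet s) :
    ∫ ω, Set.indicator s (1 : Ω → ℝ) ω ∂μ = (μ s).toReal :=
  integral_indicator_one hs

/-- weighted conformal coverage: if, conditionally on a σ-algebra 𝒢 with
respect to which all n+1 residuals are measurable (e.g. the one generated by the unordered
values), the test index K takes value k with probability w_k, then the test residual R_K
is below the weighted (1-α)-quantile of the n+1 residuals with probability at least 1-α. -/
theorem weighted_conformal_coverage {Ω : Type*} (𝒢 : MeasurableSpace Ω) [m0 : MeasurableSpace Ω]
    (μ : Measure Ω) [IsProbabilityMeasure μ]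
    (n : ℕ) (R : Fin (n + 1) → Ω → ℝ) (K : Ω → Fin (n + 1))
    (α : ℝ) (hα : α ∈ Set.Ioo (0:ℝ) 1)
    (w : Fin (n + 1) → ℝ) (hw : ∀ k, 0 ≤ w k) (hw1 : ∑ k, w k = 1)
    (h𝒢 : 𝒢 ≤ m0)
    (hRmeas : ∀ k, Measurable[𝒢] (R k))
    (hKmeas : Measurable K)
    (hcond : ∀ k,
      μ[Set.indicator {ω | K ω = k} (fun _ => (1 : ℝ)) | 𝒢] =ᵐ[μ] fun _ => w k) :
    1 - α ≤ (μ {ω | R (K ω) ω ≤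
        sInf {t : ℝ | 1 - α ≤
          ((∑ k, ENNReal.ofReal (w k) • Measure.dirac (R k ω) : Measure ℝ)
            (Set.Iic t)).toReal}}).toReal := by
  obtain ⟨hα0, hα1⟩ := hα
  set β := 1 - α with hβ
  have hβ0 : 0 < β := by linarith
  have hβ1 : β ≤ 1 := by linarith
  have hset : ∀ ω, {t : ℝ | 1 - α ≤
      ((∑ k, ENNReal.ofReal (w k) • Measure.dirac (R k ω) : Measure ℝ) (Set.Iic t)).toReal}
      = {t | β ≤ wcdf w (fun k => R k ω) t} := by
    intro ω
    ext t
    simp only [Set.mem_setOf_eq, wcc_F_eq w (fun k => R k ω) hw t, hβ]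
  set q : Ω → ℝ := fun ω => sInf {t | β ≤ wcdf w (fun k => R k ω) t} with hqdef
  have hgoal : {ω | R (K ω) ω ≤
      sInf {t : ℝ | 1 - α ≤
        ((∑ k, ENNReal.ofReal (w k) • Measure.dirac (R k ω) : Measure ℝ)
          (Set.Iic t)).toReal}} = {ω | R (K ω) ω ≤ q ω} := by
    ext ω; simp only [Set.mem_setOf_eq, hset ω, hqdef]
  rw [hgoal]
  -- measurability of q w.r.t. 𝒢
  have hwcdfmeas : ∀ c : ℝ, Measurable[𝒢] (fun ω => wcdf w (fun k => R k ω) c) := by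
    intro c
    unfold wcdf
    refine Finset.measurable_sum _ fun k _ => ?_
    exact Measurable.ite (hRmeas k measurableSet_Iic) measurable_const measurable_const
  have hqmeas : Measurable[𝒢] q := by
    refine measurable_of_Iic fun c => ?_
    have : q ⁻¹' Set.Iic c = {ω | β ≤ wcdf w (fun k => R k ω) c} := by
      ext ω
      simp only [Set.mem_preimage, Set.mem_Iic, Set.mem_setOf_eq, hqdef]
      exact wcdf_quantile_le_iff w (fun k => R k ω) β hw hw1 hβ0 hβ1 c
    rw [this]
    exact measurableSet_le measurable_const (hwcdfmeas c)
  set g : Fin (n+1) → Ω → ℝ := fun k ω => if R k ω ≤ q ω then (1:ℝ) else 0 with hgdef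
  set f : Fin (n+1) → Ω → ℝ :=
    fun k => Set.indicator {ω | K ω = k} (fun _ => (1 : ℝ)) with hfdef
  have hgmeas : ∀ k, Measurable[𝒢] (g k) :=
    fun k => Measurable.ite (measurableSet_le (hRmeas k) hqmeas) measurable_const measurable_const
  have hgbd : ∀ k ω, ‖g k ω‖ ≤ 1 := by
    intro k ω
    by_cases h : R k ω ≤ q ω <;> simp [hgdef, h]
  have hKset : ∀ k, MeasurableSet[m0] {ω | K ω = k} := by
    intro k
    exact hKmeas (measurableSet_singleton k)
  have hfint : ∀ k, Integrable (f k) μ := by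
    intro k
    exact wcc_indicator_integrable μ (hKset k)
  have hgfint : ∀ k, Integrable (g k * f k) μ := by
    intro k
    refine (hfint k).bdd_mul (c := 1) ?_ (Filter.Eventually.of_forall (hgbd k))
    exact ((hgmeas k).mono h𝒢 le_rfl).aestronglyMeasurable
  have hE : MeasurableSet[m0] {ω | R (K ω) ω ≤ q ω} := by
    have heq : {ω | R (K ω) ω ≤ q ω} = ⋃ k, ({ω | K ω = k} ∩ {ω | R k ω ≤ q ω}) := by
      ext ω
      simp only [Set.mem_setOf_eq, Set.mem_iUnion, Set.mem_inter_iff]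
      exact ⟨fun h => ⟨K ω, rfl, h⟩, fun ⟨k, hk, h⟩ => hk ▸ h⟩
    rw [heq]
    exact MeasurableSet.iUnion fun k =>
      (hKset k).inter (h𝒢 _ (measurableSet_le (hRmeas k) hqmeas))
  have hdecomp : ∀ ω, Set.indicator {ω | R (K ω) ω ≤ q ω} (1 : Ω → ℝ) ω
      = ∑ k, g k ω * f k ω := by
    intro ω
    rw [Finset.sum_eq_single (K ω)]
    · by_cases h : R (K ω) ω ≤ q ω <;>
        simp [Set.indicator, hgdef, hfdef, h]
    · intro k _ hk
      simp [hfdef, Set.indicator, Ne.symm hk]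
    · intro h
      exact absurd (mem_univ (K ω)) h
  haveI : SigmaFinite (μ.trim h𝒢) := by
    have : IsFiniteMeasure (μ.trim h𝒢) := isFiniteMeasure_trim h𝒢
    infer_instance
  have hint_eq : ∀ k, ∫ ω, g k ω * f k ω ∂μ = ∫ ω, g k ω * w k ∂μ := by
    intro k
    have h1 : μ[g k * f k | 𝒢] =ᵐ[μ] g k * μ[f k | 𝒢] :=
      condExp_stronglyMeasurable_mul_of_bound h𝒢 ((hgmeas k).stronglyMeasurable) (hfint k) 1
        (Filter.Eventually.of_forall (hgbd k))
    have h2 : g k * μ[f k | 𝒢] =ᵐ[μ] fun ω => g k ω * w k := by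
      filter_upwards [hcond k] with ω hω
      simp only [hfdef, Pi.mul_apply] at hω ⊢
      rw [hω]
    calc ∫ ω, g k ω * f k ω ∂μ = ∫ ω, (μ[g k * f k | 𝒢]) ω ∂μ :=
          (integral_condExp h𝒢).symm
      _ = ∫ ω, g k ω * w k ∂μ := integral_congr_ae (h1.trans h2)
  have hgint : ∀ k, Integrable (fun ω => g k ω * w k) μ := by
    intro k
    refine Integrable.mul_const ?_ (w k)
    refine (integrable_const (1:ℝ)).mono' ?_ (Filter.Eventually.of_forall (hgbd k))
    exact ((hgmeas k).mono h𝒢 le_rfl).aestronglyMeasurable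
  have hind := wcc_integral_indicator_one μ hE
  have hmain : (μ {ω | R (K ω) ω ≤ q ω}).toReal
      = ∫ ω, ∑ k, g k ω * w k ∂μ := by
    rw [← hind]
    calc ∫ ω, Set.indicator {ω | R (K ω) ω ≤ q ω} (1 : Ω → ℝ) ω ∂μ
        = ∫ ω, ∑ k, g k ω * f k ω ∂μ :=
          integral_congr_ae (Filter.Eventually.of_forall hdecomp)
      _ = ∑ k, ∫ ω, g k ω * f k ω ∂μ := integral_finset_sum _ (fun k _ => hgfint k)
      _ = ∑ k, ∫ ω, g k ω * w k ∂μ := Finset.sum_congr rfl fun k _ => hint_eq k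
      _ = ∫ ω, ∑ k, g k ω * w k ∂μ := (integral_finset_sum _ (fun k _ => hgint k)).symm
  rw [hmain]
  have hpt : ∀ ω, β ≤ ∑ k, g k ω * w k := by
    intro ω
    have hsum : ∑ k, g k ω * w k = wcdf w (fun k => R k ω) (q ω) := by
      unfold wcdf
      refine Finset.sum_congr rfl fun k _ => ?_
      by_cases h : R k ω ≤ q ω <;> simp [hgdef, h]
    rw [hsum]
    exact wcdf_attains w (fun k => R k ω) β hw hw1 hβ0 hβ1
  calc (1:ℝ) - α = ∫ _, β ∂μ := by simp [hβ]
    _ ≤ ∫ ω, ∑ k, g k ω * w k ∂μ :=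
        integral_mono (integrable_const β)
          (integrable_finset_sum _ fun k _ => hgint k) hpt
end

section
/- Let h_{ij} > 0 and ĥ_{ij} > 0 for (i,j) in a finite set T. Define Δ = (1/2) Σ_{(i,j)∈T} | ĥ_{ij}/Σ_{(i',j')∈T} ĥ_{i'j'} − h_{ij}/Σ_{(i',j')∈T} h_{i'j'} |. Then Δ ≤ (Σ_{(i,j)∈T} |ĥ_{ij} − h_{ij}|) / (Σ_{(i',j')∈T} ĥ_{i'j'}). -/
/-!
Write `A = ∑ ĥ` and `B = ∑ h`. Each coordinate splits as
`ĥᵢ/A - hᵢ/B = (ĥᵢ - hᵢ)/A + (hᵢ/B)(B - A)/A`; summing absolute values and using that `h/B` has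
total mass one gives `‖ĥ/A - h/B‖₁ ≤ (‖ĥ - h‖₁ + |B - A|)/A`, and `|B - A| ≤ ‖ĥ - h‖₁`.
-/

open Finset

section

variable {ι : Type*} (s : Finset ι)

theorem abs_sum_sub_sum_le_sum_abs_sub (f g : ι → ℝ) :
    |∑ i ∈ s, f i - ∑ i ∈ s, g i| ≤ ∑ i ∈ s, |f i - g i| := by
  rw [← sum_sub_distrib]
  exact abs_sum_le_sum_abs _ _

theorem div_sub_div_eq_sub_div_add {x y a b : ℝ} (ha : a ≠ 0) (hb : b ≠ 0) :
    x / a - y / b = (x - y) / a + y / b * (b - a) / a := by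
  field_simp
  ring

theorem sum_abs_div_sub_div_le (f g : ι → ℝ) {a b : ℝ} (ha : a ≠ 0) (hb : b ≠ 0) :
    ∑ i ∈ s, |f i / a - g i / b| ≤
      (∑ i ∈ s, |f i - g i| + (∑ i ∈ s, |g i / b|) * |b - a|) / |a| := by
  calc ∑ i ∈ s, |f i / a - g i / b|
      ≤ ∑ i ∈ s, (|f i - g i| / |a| + |g i / b| * |b - a| / |a|) := by
        gcongr with i
        rw [div_sub_div_eq_sub_div_add ha hb, ← abs_div, ← abs_mul, ← abs_div]
        exact abs_add_le _ _
    _ = (∑ i ∈ s, |f i - g i| + (∑ i ∈ s, |g i / b|) * |b - a|) / |a| := by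
        rw [sum_add_distrib, ← sum_div, ← sum_div, ← sum_mul, add_div]

theorem sum_abs_div_sum_of_nonneg {g : ι → ℝ} (hg : ∀ i ∈ s, 0 ≤ g i)
    (hsum : ∑ i ∈ s, g i ≠ 0) :
    ∑ i ∈ s, |g i / ∑ j ∈ s, g j| = 1 := by
  have hsum_nonneg : 0 ≤ ∑ j ∈ s, g j := sum_nonneg hg
  rw [sum_congr rfl fun i hi => abs_of_nonneg (div_nonneg (hg i hi) hsum_nonneg), ← sum_div,
    div_self hsum]

end

/-- Lemma 2 of the paper: half the ℓ₁ distance between the two normalized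
positive weight vectors is bounded by the ℓ₁ estimation error of the unnormalized weights
divided by the estimated normalizing constant. -/
theorem normalized_weights_l1_bound {ι : Type*} (T : Finset ι) (h hhat : ι → ℝ)
    (hpos : ∀ i ∈ T, 0 < h i) (hhatpos : ∀ i ∈ T, 0 < hhat i) :
    (1 / 2) * ∑ i ∈ T, |hhat i / (∑ j ∈ T, hhat j) - h i / (∑ j ∈ T, h j)| ≤
      (∑ i ∈ T, |hhat i - h i|) / (∑ j ∈ T, hhat j) := by
  rcases T.eq_empty_or_nonempty with rfl | hne
  · simp
  have hA : 0 < ∑ j ∈ T, hhat j := sum_pos hhatpos hne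
  have hB : 0 < ∑ j ∈ T, h j := sum_pos hpos hne
  have hsplit := sum_abs_div_sub_div_le T hhat h hA.ne' hB.ne'
  rw [sum_abs_div_sum_of_nonneg T (fun i hi => (hpos i hi).le) hB.ne', one_mul,
    abs_of_pos hA] at hsplit
  have hgap := abs_sum_sub_sum_le_sum_abs_sub T h hhat
  simp only [abs_sub_comm (h _)] at hgap
  calc (1 / 2) * ∑ i ∈ T, |hhat i / (∑ j ∈ T, hhat j) - h i / (∑ j ∈ T, h j)|
      ≤ (1 / 2) * ((∑ i ∈ T, |hhat i - h i| + ∑ i ∈ T, |hhat i - h i|) / ∑ j ∈ T, hhat j) := by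
        grw [hsplit, hgap]
    _ = (∑ i ∈ T, |hhat i - h i|) / ∑ j ∈ T, hhat j := by ring
end
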